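/- Let E and F be directed graphs. Then the topological groupoids G_E × ℛ and G_F × ℛ are isomorphic if and only if the topological groupoids G_{SE} and G_{SF} are isomorphic. -/

import Mathlib

universe u v w

/-- An (algebraic) groupoid structure on a type `G` of arrows.  The multiplication is a total
function, but all axioms involving `mul a b` are only imposed when `a` and `b` are composable,
i.e. when `src a = rng b`.  Units are the common values of `src` and `rng`. -/
structure GroupoidStruct (G : Type u) where
  src : G → G
  rng : G → G
  mul : G → G → G
  inv : G → G
  src_src : ∀ a, src (src a) = src a
  rng_src : ∀ a, rng (src a) = src a
  src_rng : ∀ a, src (rng a) = rng a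
  rng_rng : ∀ a, rng (rng a) = rng a
  mul_assoc : ∀ a b c, src a = rng b → src b = rng c → mul (mul a b) c = mul a (mul b c)
  src_mul : ∀ a b, src a = rng b → src (mul a b) = src b
  rng_mul : ∀ a b, src a = rng b → rng (mul a b) = rng a
  mul_src : ∀ a, mul a (src a) = a
  rng_mul_self : ∀ a, mul (rng a) a = a
  src_inv : ∀ a, src (inv a) = rng a
  rng_inv : ∀ a, rng (inv a) = src a
  mul_inv : ∀ a, mul a (inv a) = rng a
  inv_mul : ∀ a, mul (inv a) a = src a

namespace GroupoidStruct

variable {G : Type u} {H : Type v}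

/-- The unit space `G⁰` of a groupoid. -/
def units (S : GroupoidStruct G) : Set G := {x | S.src x = x ∧ S.rng x = x}

/-- The range map, viewed as a map `G → G⁰`. -/
def rngMap (S : GroupoidStruct G) (g : G) : S.units := ⟨S.rng g, S.src_rng g, S.rng_rng g⟩

/-- The source map, viewed as a map `G → G⁰`. -/
def srcMap (S : GroupoidStruct G) (g : G) : S.units := ⟨S.src g, S.src_src g, S.rng_src g⟩

/-- A topological groupoid: inversion is continuous and multiplication is continuous on the
set of composable pairs. -/
structure IsTopologicalGroupoid [TopologicalSpace G] (S : GroupoidStruct G) : Prop where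
  continuous_inv : Continuous S.inv
  continuousOn_mul :
    ContinuousOn (fun p : G × G => S.mul p.1 p.2) {p : G × G | S.src p.1 = S.rng p.2}

/-- An ample groupoid: a topological groupoid whose topology has a basis of compact open sets,
whose unit space is Hausdorff, and whose range and source maps are local homeomorphisms onto
the unit space. -/
structure IsAmple [TopologicalSpace G] (S : GroupoidStruct G)
    extends IsTopologicalGroupoid S : Prop where
  compact_open_basis : ∃ B : Set (Set G),
    (∀ U ∈ B, IsCompact U ∧ IsOpen U) ∧ TopologicalSpace.IsTopologicalBasis B
  t2_units : T2Space S.units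
  isLocalHomeomorph_rngMap : IsLocalHomeomorph S.rngMap
  isLocalHomeomorph_srcMap : IsLocalHomeomorph S.srcMap

/-- `K ⊆ G⁰` is `G`-full if `r(GK) = G⁰`, where `GK = s⁻¹(K)`. -/
def IsFull (S : GroupoidStruct G) (K : Set G) : Prop := S.rng '' (S.src ⁻¹' K) = S.units

/-- `K` is an open subset of the unit space (in the subspace topology of `G⁰`). -/
def IsUnitOpen [TopologicalSpace G] (S : GroupoidStruct G) (K : Set G) : Prop :=
  K ⊆ S.units ∧ IsOpen {x : S.units | (x : G) ∈ K}

/-- `K` is a clopen subset of the unit space (in the subspace topology of `G⁰`). -/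
def IsUnitClopen [TopologicalSpace G] (S : GroupoidStruct G) (K : Set G) : Prop :=
  K ⊆ S.units ∧ IsClopen {x : S.units | (x : G) ∈ K}

/-- `K` is a compact open subset of the unit space. -/
def IsUnitCompactOpen [TopologicalSpace G] (S : GroupoidStruct G) (K : Set G) : Prop :=
  K ⊆ S.units ∧ IsCompact K ∧ IsOpen {x : S.units | (x : G) ∈ K}

/-- An open bisection: an open set on which both the range and the source map restrict to
homeomorphisms onto their images (i.e. are topological embeddings). -/
def IsOpenBisection [TopologicalSpace G] (S : GroupoidStruct G) (U : Set G) : Prop :=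
  IsOpen U ∧ Topology.IsEmbedding (U.restrict S.rng) ∧ Topology.IsEmbedding (U.restrict S.src)

/-- A compact open bisection. -/
def IsCompactOpenBisection [TopologicalSpace G] (S : GroupoidStruct G) (U : Set G) : Prop :=
  IsCompact U ∧ S.IsOpenBisection U

/-- The product of two groupoids, with coordinatewise operations. -/
def prod (S : GroupoidStruct G) (T : GroupoidStruct H) : GroupoidStruct (G × H) where
  src p := (S.src p.1, T.src p.2)
  rng p := (S.rng p.1, T.rng p.2)
  mul p q := (S.mul p.1 q.1, T.mul p.2 q.2)
  inv p := (S.inv p.1, T.inv p.2)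
  src_src a := Prod.ext_iff.mpr ⟨S.src_src _, T.src_src _⟩
  rng_src a := Prod.ext_iff.mpr ⟨S.rng_src _, T.rng_src _⟩
  src_rng a := Prod.ext_iff.mpr ⟨S.src_rng _, T.src_rng _⟩
  rng_rng a := Prod.ext_iff.mpr ⟨S.rng_rng _, T.rng_rng _⟩
  mul_assoc a b c h1 h2 := by
    obtain ⟨h1a, h1b⟩ := Prod.ext_iff.mp h1
    obtain ⟨h2a, h2b⟩ := Prod.ext_iff.mp h2
    exact Prod.ext_iff.mpr ⟨S.mul_assoc _ _ _ h1a h2a, T.mul_assoc _ _ _ h1b h2b⟩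
  src_mul a b h := by
    obtain ⟨ha, hb⟩ := Prod.ext_iff.mp h
    exact Prod.ext_iff.mpr ⟨S.src_mul _ _ ha, T.src_mul _ _ hb⟩
  rng_mul a b h := by
    obtain ⟨ha, hb⟩ := Prod.ext_iff.mp h
    exact Prod.ext_iff.mpr ⟨S.rng_mul _ _ ha, T.rng_mul _ _ hb⟩
  mul_src a := Prod.ext_iff.mpr ⟨S.mul_src _, T.mul_src _⟩
  rng_mul_self a := Prod.ext_iff.mpr ⟨S.rng_mul_self _, T.rng_mul_self _⟩
  src_inv a := Prod.ext_iff.mpr ⟨S.src_inv _, T.src_inv _⟩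
  rng_inv a := Prod.ext_iff.mpr ⟨S.rng_inv _, T.rng_inv _⟩
  mul_inv a := Prod.ext_iff.mpr ⟨S.mul_inv _, T.mul_inv _⟩
  inv_mul a := Prod.ext_iff.mpr ⟨S.inv_mul _, T.inv_mul _⟩

/-- The full equivalence relation `ℛ = ℕ × ℕ`, regarded as a (discrete, principal) groupoid
with unit space `ℕ`. -/
def Rho : GroupoidStruct (ℕ × ℕ) where
  src p := (p.2, p.2)
  rng p := (p.1, p.1)
  mul p q := (p.1, q.2)
  inv p := (p.2, p.1)
  src_src _ := rfl
  rng_src _ := rfl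
  src_rng _ := rfl
  rng_rng _ := rfl
  mul_assoc _ _ _ _ _ := rfl
  src_mul _ _ _ := rfl
  rng_mul _ _ _ := rfl
  mul_src _ := rfl
  rng_mul_self _ := rfl
  src_inv _ := rfl
  rng_inv _ := rfl
  mul_inv _ := rfl
  inv_mul _ := rfl

/-- An isomorphism of topological groupoids: a homeomorphism of the arrow spaces respecting
all the groupoid operations. -/
structure GroupoidIso [TopologicalSpace G] [TopologicalSpace H]
    (S : GroupoidStruct G) (T : GroupoidStruct H) extends G ≃ₜ H where
  map_mul : ∀ a b, S.src a = S.rng b →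
    toHomeomorph (S.mul a b) = T.mul (toHomeomorph a) (toHomeomorph b)
  map_inv : ∀ a, toHomeomorph (S.inv a) = T.inv (toHomeomorph a)
  map_src : ∀ a, toHomeomorph (S.src a) = T.src (toHomeomorph a)
  map_rng : ∀ a, toHomeomorph (S.rng a) = T.rng (toHomeomorph a)

/-- The arrow space `G|_K = r⁻¹(K) ∩ s⁻¹(K)` of the restriction of `G` to `K ⊆ G⁰`,
with the subspace topology. -/
abbrev Restrict (S : GroupoidStruct G) (K : Set G) : Type u :=
  {g : G // S.rng g ∈ K ∧ S.src g ∈ K}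

variable (S : GroupoidStruct G) (K : Set G)

def rsrc (a : S.Restrict K) : S.Restrict K :=
  ⟨S.src a.1, by rw [S.rng_src]; exact a.2.2, by rw [S.src_src]; exact a.2.2⟩

def rrng (a : S.Restrict K) : S.Restrict K :=
  ⟨S.rng a.1, by rw [S.rng_rng]; exact a.2.1, by rw [S.src_rng]; exact a.2.1⟩

def rinv (a : S.Restrict K) : S.Restrict K :=
  ⟨S.inv a.1, by rw [S.rng_inv]; exact a.2.2, by rw [S.src_inv]; exact a.2.1⟩

open Classical in
noncomputable def rmul (a b : S.Restrict K) : S.Restrict K :=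
  if h : S.src a.1 = S.rng b.1 then
    ⟨S.mul a.1 b.1, by rw [S.rng_mul _ _ h]; exact a.2.1, by rw [S.src_mul _ _ h]; exact b.2.2⟩
  else a

@[simp] lemma rsrc_val (a : S.Restrict K) : (S.rsrc K a).1 = S.src a.1 := rfl
@[simp] lemma rrng_val (a : S.Restrict K) : (S.rrng K a).1 = S.rng a.1 := rfl
@[simp] lemma rinv_val (a : S.Restrict K) : (S.rinv K a).1 = S.inv a.1 := rfl

lemma rmul_val (a b : S.Restrict K) (h : S.src a.1 = S.rng b.1) :
    (S.rmul K a b).1 = S.mul a.1 b.1 := by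
  unfold rmul
  rw [dif_pos h]

/-- The restriction `G|_K` of a groupoid to a subset `K` of its unit space. -/
noncomputable def restrict : GroupoidStruct (S.Restrict K) where
  src := S.rsrc K
  rng := S.rrng K
  mul := S.rmul K
  inv := S.rinv K
  src_src a := Subtype.ext (S.src_src a.1)
  rng_src a := Subtype.ext (S.rng_src a.1)
  src_rng a := Subtype.ext (S.src_rng a.1)
  rng_rng a := Subtype.ext (S.rng_rng a.1)
  mul_assoc a b c h1 h2 := by
    have h1' : S.src a.1 = S.rng b.1 := congrArg Subtype.val h1
    have h2' : S.src b.1 = S.rng c.1 := congrArg Subtype.val h2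
    have hab := S.rmul_val K a b h1'
    have hbc := S.rmul_val K b c h2'
    apply Subtype.ext
    calc (S.rmul K (S.rmul K a b) c).1
        = S.mul (S.rmul K a b).1 c.1 :=
          S.rmul_val K _ _ (by rw [hab, S.src_mul _ _ h1']; exact h2')
      _ = S.mul (S.mul a.1 b.1) c.1 := by rw [hab]
      _ = S.mul a.1 (S.mul b.1 c.1) := S.mul_assoc _ _ _ h1' h2'
      _ = S.mul a.1 (S.rmul K b c).1 := by rw [hbc]
      _ = (S.rmul K a (S.rmul K b c)).1 :=
          (S.rmul_val K _ _ (by rw [hbc, S.rng_mul _ _ h2']; exact h1')).symm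
  src_mul a b h := by
    have h' : S.src a.1 = S.rng b.1 := congrArg Subtype.val h
    apply Subtype.ext
    show S.src (S.rmul K a b).1 = S.src b.1
    rw [S.rmul_val K a b h', S.src_mul _ _ h']
  rng_mul a b h := by
    have h' : S.src a.1 = S.rng b.1 := congrArg Subtype.val h
    apply Subtype.ext
    show S.rng (S.rmul K a b).1 = S.rng a.1
    rw [S.rmul_val K a b h', S.rng_mul _ _ h']
  mul_src a := by
    apply Subtype.ext
    rw [S.rmul_val K a _ (by rw [rsrc_val, S.rng_src]), rsrc_val]
    exact S.mul_src a.1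
  rng_mul_self a := by
    apply Subtype.ext
    rw [S.rmul_val K _ a (by rw [rrng_val, S.src_rng]), rrng_val]
    exact S.rng_mul_self a.1
  src_inv a := Subtype.ext (S.src_inv a.1)
  rng_inv a := Subtype.ext (S.rng_inv a.1)
  mul_inv a := by
    apply Subtype.ext
    rw [S.rmul_val K a _ (by rw [rinv_val, S.rng_inv]), rinv_val]
    exact S.mul_inv a.1
  inv_mul a := by
    apply Subtype.ext
    rw [S.rmul_val K _ a (by rw [rinv_val, S.src_inv]), rinv_val]
    exact S.inv_mul a.1

variable {S K}

/-- The data of a groupoid equivalence between `G` and `H`: a space `Z` carrying commuting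
free and proper continuous actions of `G` (on the left) and `H` (on the right), whose anchor
maps `ρ : Z → G⁰` and `σ : Z → H⁰` induce homeomorphisms `Z/H ≅ G⁰` and `G\Z ≅ H⁰`.
The latter conditions are encoded by requiring that the fibres of `ρ` are exactly the
`H`-orbits, that `ρ` is surjective onto `G⁰`, and that `ρ` is a topological quotient map onto
`G⁰` (and symmetrically for `σ`): this says precisely that the induced map `Z/H → G⁰` is a
homeomorphism. -/
structure GroupoidEquivalenceData [TopologicalSpace G] [TopologicalSpace H]
    (S : GroupoidStruct G) (T : GroupoidStruct H) (Z : Type w) [TopologicalSpace Z] where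
  ρ : Z → G
  σ : Z → H
  ρ_unit : ∀ z, ρ z ∈ S.units
  σ_unit : ∀ z, σ z ∈ T.units
  continuous_ρ : Continuous ρ
  continuous_σ : Continuous σ
  actL : G → Z → Z
  actR : Z → H → Z
  ρ_actL : ∀ g z, S.src g = ρ z → ρ (actL g z) = S.rng g
  σ_actL : ∀ g z, S.src g = ρ z → σ (actL g z) = σ z
  actL_unit : ∀ z, actL (ρ z) z = z
  actL_mul : ∀ g g' z, S.src g = S.rng g' → S.src g' = ρ z →
    actL (S.mul g g') z = actL g (actL g' z)
  σ_actR : ∀ z h, σ z = T.rng h → σ (actR z h) = T.src h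
  ρ_actR : ∀ z h, σ z = T.rng h → ρ (actR z h) = ρ z
  actR_unit : ∀ z, actR z (σ z) = z
  actR_mul : ∀ z h h', σ z = T.rng h → T.src h = T.rng h' →
    actR (actR z h) h' = actR z (T.mul h h')
  act_comm : ∀ g z h, S.src g = ρ z → σ z = T.rng h →
    actL g (actR z h) = actR (actL g z) h
  continuousOn_actL :
    ContinuousOn (fun p : G × Z => actL p.1 p.2) {p : G × Z | S.src p.1 = ρ p.2}
  continuousOn_actR :
    ContinuousOn (fun p : Z × H => actR p.1 p.2) {p : Z × H | σ p.1 = T.rng p.2}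
  free_actL : ∀ g z, S.src g = ρ z → actL g z = z → g = ρ z
  free_actR : ∀ z h, σ z = T.rng h → actR z h = z → h = σ z
  proper_actL : IsProperMap (fun p : {q : G × Z // S.src q.1 = ρ q.2} =>
    ((actL p.1.1 p.1.2, p.1.2) : Z × Z))
  proper_actR : IsProperMap (fun p : {q : Z × H // σ q.1 = T.rng q.2} =>
    ((actR p.1.1 p.1.2, p.1.1) : Z × Z))
  ρ_fiber_orbit : ∀ z z', ρ z = ρ z' ↔ ∃ h, σ z = T.rng h ∧ z' = actR z h
  σ_fiber_orbit : ∀ z z', σ z = σ z' ↔ ∃ g, S.src g = ρ z ∧ z' = actL g z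
  ρ_surj : Set.range ρ = S.units
  σ_surj : Set.range σ = T.units
  quotient_ρ : Topology.IsQuotientMap (fun z => (⟨ρ z, ρ_unit z⟩ : S.units))
  quotient_σ : Topology.IsQuotientMap (fun z => (⟨σ z, σ_unit z⟩ : T.units))

/-- `G` and `H` are groupoid equivalent if there exists a `G`–`H` equivalence. -/
def GroupoidEquivalent [TopologicalSpace G] [TopologicalSpace H]
    (S : GroupoidStruct G) (T : GroupoidStruct H) : Prop :=
  ∃ (Z : Type (max u v)) (_ : TopologicalSpace Z), Nonempty (GroupoidEquivalenceData S T Z)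

/-- Kakutani equivalence of ample groupoids: there are full clopen subsets `X ⊆ G⁰`, `Y ⊆ H⁰`
with `G|_X ≅ H|_Y`. -/
def KakutaniEquivalent [TopologicalSpace G] [TopologicalSpace H]
    (S : GroupoidStruct G) (T : GroupoidStruct H) : Prop :=
  ∃ (X : Set G) (Y : Set H), S.IsUnitClopen X ∧ S.IsFull X ∧ T.IsUnitClopen Y ∧ T.IsFull Y ∧
    Nonempty (GroupoidIso (S.restrict X) (T.restrict Y))

end GroupoidStruct
/-! ### Directed graphs, boundary path spaces and graph groupoids -/

/-- A directed graph: vertices, edges, and source/range maps.  We use the convention that a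
path `e₁e₂⋯eₙ` satisfies `r(eᵢ) = s(eᵢ₊₁)`. -/
structure DirGraph : Type (u + 1) where
  V : Type u
  E : Type u
  s : E → V
  r : E → V

namespace DirGraph

/-- `IsPathList Γ v l w`: the list of edges `l` forms a path from `v` to `w`. -/
inductive IsPathList (Γ : DirGraph) : Γ.V → List Γ.E → Γ.V → Prop
  | nil (v : Γ.V) : IsPathList Γ v [] v
  | cons {v w : Γ.V} (e : Γ.E) {l : List Γ.E} (hv : Γ.s e = v)
      (h : IsPathList Γ (Γ.r e) l w) : IsPathList Γ v (e :: l) w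

lemma isPathList_cons_tail {Γ : DirGraph} {v w : Γ.V} {e : Γ.E} {l : List Γ.E}
    (h : Γ.IsPathList v (e :: l) w) : Γ.IsPathList (Γ.r e) l w := by
  cases h; assumption

/-- A finite path in a directed graph. -/
structure FinPath (Γ : DirGraph) where
  src : Γ.V
  edges : List Γ.E
  rng : Γ.V
  isPath : Γ.IsPathList src edges rng

/-- An infinite path in a directed graph. -/
structure InfPath (Γ : DirGraph) where
  edges : ℕ → Γ.E
  compat : ∀ n, Γ.r (edges n) = Γ.s (edges (n + 1))

/-- A sink: a vertex emitting no edges. -/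
def IsSink (Γ : DirGraph) (v : Γ.V) : Prop := ∀ e, Γ.s e ≠ v

/-- An infinite emitter: a vertex emitting infinitely many edges. -/
def IsInfiniteEmitter (Γ : DirGraph) (v : Γ.V) : Prop := {e | Γ.s e = v}.Infinite

def IsBoundaryVertex (Γ : DirGraph) (v : Γ.V) : Prop :=
  Γ.IsSink v ∨ Γ.IsInfiniteEmitter v

/-- The boundary path space `∂E`: all infinite paths together with all finite paths whose
range is a sink or an infinite emitter. -/
inductive BPath (Γ : DirGraph) : Type u
  | fin (p : Γ.FinPath) (hb : Γ.IsBoundaryVertex p.rng) : BPath Γ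
  | inf (x : Γ.InfPath) : BPath Γ

variable {Γ : DirGraph}

namespace BPath

/-- The source (initial vertex) of a boundary path. -/
def src : Γ.BPath → Γ.V
  | .fin p _ => p.src
  | .inf x => Γ.s (x.edges 0)

/-- The length of a boundary path, in `ℕ∞`. -/
def length : Γ.BPath → ℕ∞
  | .fin p _ => (p.edges.length : ℕ∞)
  | .inf _ => ⊤

/-- The `n`-th edge of a boundary path, if defined. -/
def edge? : Γ.BPath → ℕ → Option Γ.E
  | .fin p _, n => p.edges[n]?
  | .inf x, n => some (x.edges n)

/-- Remove the first edge of a boundary path (identity on paths of length zero). -/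
def tail : Γ.BPath → Γ.BPath
  | .fin ⟨v, [], w, h⟩ hb => .fin ⟨v, [], w, h⟩ hb
  | .fin ⟨_, e :: l, w, h⟩ hb => .fin ⟨Γ.r e, l, w, isPathList_cons_tail h⟩ hb
  | .inf x => .inf ⟨fun n => x.edges (n + 1), fun n => x.compat (n + 1)⟩

/-- The shift map `σⁿ`, removing the first `n` edges. -/
def shift (n : ℕ) (x : Γ.BPath) : Γ.BPath := tail^[n] x

/-- Prepend an edge to a boundary path. -/
def cons (e : Γ.E) : (x : Γ.BPath) → x.src = Γ.r e → Γ.BPath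
  | .fin p hb, h => .fin ⟨Γ.s e, e :: p.edges, p.rng, .cons e rfl (h ▸ p.isPath)⟩ hb
  | .inf x, h => .inf ⟨fun n => Nat.casesOn n e fun k => x.edges k,
      fun n => by
        cases n with
        | zero => exact h.symm
        | succ k => exact x.compat k⟩

open Classical in
/-- Prepend an edge to a boundary path when composable; otherwise do nothing. -/
noncomputable def consE (e : Γ.E) (x : Γ.BPath) : Γ.BPath :=
  if h : x.src = Γ.r e then x.cons e h else x

/-- Concatenation `μx` of a finite path `μ` with a boundary path `x` (extending by junk when
the paths are not composable). -/
noncomputable def concat (μ : Γ.FinPath) (x : Γ.BPath) : Γ.BPath :=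
  μ.edges.foldr consE x

/-- `x` has the finite path `μ` as an initial segment. -/
def hasPrefix (x : Γ.BPath) (μ : Γ.FinPath) : Prop :=
  x.src = μ.src ∧ ∀ n < μ.edges.length, x.edge? n = μ.edges[n]?

/-- The cylinder set `Z(μ ∖ F)`. -/
def cyl (μ : Γ.FinPath) (F : Finset Γ.E) : Set Γ.BPath :=
  {x | x.hasPrefix μ ∧ ∀ e ∈ F, x.edge? μ.edges.length ≠ some e}

/-- The topology on the boundary path space, generated by the cylinder sets `Z(μ ∖ F)`. -/
instance : TopologicalSpace Γ.BPath :=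
  TopologicalSpace.generateFrom
    {U | ∃ (μ : Γ.FinPath) (F : Finset Γ.E), (∀ e ∈ F, Γ.s e = μ.rng) ∧ U = cyl μ F}

lemma length_tail (x : Γ.BPath) : x.tail.length = x.length - 1 := by
  cases x with
  | fin p hb =>
    cases p with
    | mk v l w hp =>
      cases l with
      | nil => simp [tail, length, zero_tsub]
      | cons e l' =>
        simp only [tail, length, List.length_cons]
        rw [← Nat.cast_one (R := ℕ∞), ← ENat.coe_sub]
        norm_num
  | inf x => simp [tail, length]

lemma length_shift (n : ℕ) (x : Γ.BPath) : (shift n x).length = x.length - n := by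
  induction n generalizing x with
  | zero => simp [shift]
  | succ k ih =>
    have hs : shift (k + 1) x = tail (shift k x) := Function.iterate_succ_apply' tail k x
    rw [hs, length_tail, ih, tsub_tsub]
    norm_cast

lemma shift_shift (m n : ℕ) (x : Γ.BPath) : shift m (shift n x) = shift (n + m) x := by
  simp only [shift, ← Function.iterate_add_apply]
  rw [Nat.add_comm]

end BPath

lemma enat_add_le {a c : ℕ} {t : ℕ∞} (h1 : (a : ℕ∞) ≤ t) (h2 : (c : ℕ∞) ≤ t - a) :
    ((a + c : ℕ) : ℕ∞) ≤ t := by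
  induction t using ENat.recTopCoe with
  | top => exact le_top
  | coe N =>
    rw [← ENat.coe_sub] at h2
    rw [Nat.cast_le] at h1 h2 ⊢
    omega

/-- The arrow space of the graph groupoid `G_E`. -/
def GraphGpd (Γ : DirGraph) : Type u :=
  {t : Γ.BPath × ℤ × Γ.BPath // ∃ m n : ℕ,
    (m : ℤ) - (n : ℤ) = t.2.1 ∧ (m : ℕ∞) ≤ t.1.length ∧ (n : ℕ∞) ≤ t.2.2.length ∧
    BPath.shift m t.1 = BPath.shift n t.2.2}

/-- The vertex path at a vertex `v`. -/
def FinPath.ofVertex (Γ : DirGraph) (v : Γ.V) : Γ.FinPath := ⟨v, [], v, .nil v⟩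

/-- The topology on the graph groupoid, generated by the basic sets `Z(α, β ∖ F)`. -/
instance (Γ : DirGraph) : TopologicalSpace Γ.GraphGpd :=
  TopologicalSpace.generateFrom
    {U | ∃ (α β : Γ.FinPath) (F : Finset Γ.E), α.rng = β.rng ∧ (∀ e ∈ F, Γ.s e = α.rng) ∧
      U = {t : Γ.GraphGpd | ∃ x : Γ.BPath,
        x ∈ BPath.cyl (FinPath.ofVertex Γ α.rng) F ∧
        t.1 = (BPath.concat α x, (α.edges.length : ℤ) - (β.edges.length : ℤ),
          BPath.concat β x)}}

def gsrc (t : Γ.GraphGpd) : Γ.GraphGpd :=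
  ⟨(t.1.2.2, 0, t.1.2.2), 0, 0, by simp, by simp, by simp, rfl⟩

def grng (t : Γ.GraphGpd) : Γ.GraphGpd :=
  ⟨(t.1.1, 0, t.1.1), 0, 0, by simp, by simp, by simp, rfl⟩

def ginv (t : Γ.GraphGpd) : Γ.GraphGpd :=
  ⟨(t.1.2.2, -t.1.2.1, t.1.1), by
    obtain ⟨m, n, he, hl1, hl2, hs⟩ := t.2
    refine ⟨n, m, ?_, hl2, hl1, hs.symm⟩
    show (n : ℤ) - (m : ℤ) = -t.1.2.1
    omega⟩

open Classical in
noncomputable def gmul (t u : Γ.GraphGpd) : Γ.GraphGpd :=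
  if h : t.1.2.2 = u.1.1 then
    ⟨(t.1.1, t.1.2.1 + u.1.2.1, u.1.2.2), by
      obtain ⟨m1, n1, e1, l1, l1', s1⟩ := t.2
      obtain ⟨m2, n2, e2, l2, l2', s2⟩ := u.2
      rw [h] at l1' s1
      have hlen : t.1.1.length - m1 = u.1.1.length - n1 := by
        have := congrArg BPath.length s1
        rwa [BPath.length_shift, BPath.length_shift] at this
      refine ⟨m1 + (m2 - n1), n2 + (n1 - m2), ?_, ?_, ?_, ?_⟩
      · show ((m1 + (m2 - n1) : ℕ) : ℤ) - ((n2 + (n1 - m2) : ℕ) : ℤ) = t.1.2.1 + u.1.2.1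
        omega
      · refine enat_add_le l1 ?_
        rw [hlen, ENat.coe_sub]
        exact tsub_le_tsub_right l2 _
      · refine enat_add_le l2' ?_
        have hlen2 : u.1.1.length - m2 = u.1.2.2.length - n2 := by
          have := congrArg BPath.length s2
          rwa [BPath.length_shift, BPath.length_shift] at this
        rw [← hlen2, ENat.coe_sub]
        exact tsub_le_tsub_right l1' _
      · have key : n1 + (m2 - n1) = m2 + (n1 - m2) := by omega
        calc BPath.shift (m1 + (m2 - n1)) t.1.1
            = BPath.shift (m2 - n1) (BPath.shift m1 t.1.1) := (BPath.shift_shift _ _ _).symm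
          _ = BPath.shift (m2 - n1) (BPath.shift n1 u.1.1) := by rw [s1]
          _ = BPath.shift (n1 + (m2 - n1)) u.1.1 := BPath.shift_shift _ _ _
          _ = BPath.shift (m2 + (n1 - m2)) u.1.1 := by rw [key]
          _ = BPath.shift (n1 - m2) (BPath.shift m2 u.1.1) := (BPath.shift_shift _ _ _).symm
          _ = BPath.shift (n1 - m2) (BPath.shift n2 u.1.2.2) := by rw [s2]
          _ = BPath.shift (n2 + (n1 - m2)) u.1.2.2 := BPath.shift_shift _ _ _⟩
  else t

@[simp] lemma gsrc_val (t : Γ.GraphGpd) : (gsrc t).1 = (t.1.2.2, 0, t.1.2.2) := rfl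
@[simp] lemma grng_val (t : Γ.GraphGpd) : (grng t).1 = (t.1.1, 0, t.1.1) := rfl
@[simp] lemma ginv_val (t : Γ.GraphGpd) : (ginv t).1 = (t.1.2.2, -t.1.2.1, t.1.1) := rfl

lemma gmul_val (t u : Γ.GraphGpd) (h : t.1.2.2 = u.1.1) :
    (gmul t u).1 = (t.1.1, t.1.2.1 + u.1.2.1, u.1.2.2) := by
  first
    | (unfold gmul; split <;> first | rfl | contradiction)
    | (simp only [gmul]; split <;> first | rfl | contradiction)
    | (unfold gmul; erw [dif_pos h])
    | (delta gmul; simp [h])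

/-- The graph groupoid `G_E` of a directed graph. -/
noncomputable def graphGpd (Γ : DirGraph) : GroupoidStruct Γ.GraphGpd where
  src := gsrc
  rng := grng
  mul := gmul
  inv := ginv
  src_src t := Subtype.ext rfl
  rng_src t := Subtype.ext rfl
  src_rng t := Subtype.ext rfl
  rng_rng t := Subtype.ext rfl
  mul_assoc t u v h1 h2 := by
    have h12 : t.1.2.2 = u.1.1 := congrArg (fun w => w.1.1) h1
    have h23 : u.1.2.2 = v.1.1 := congrArg (fun w => w.1.1) h2
    have htu := gmul_val t u h12
    have huv := gmul_val u v h23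
    have hA : (gmul t u).1.2.2 = v.1.1 := by rw [htu]; exact h23
    have hB : t.1.2.2 = (gmul u v).1.1 := by rw [huv]; exact h12
    apply Subtype.ext
    rw [gmul_val _ _ hA, gmul_val _ _ hB, htu, huv]
    simp [add_assoc]
  src_mul t u h := by
    have h' : t.1.2.2 = u.1.1 := congrArg (fun w => w.1.1) h
    apply Subtype.ext
    show ((gmul t u).1.2.2, (0 : ℤ), (gmul t u).1.2.2) = _
    rw [gmul_val _ _ h']
    rfl
  rng_mul t u h := by
    have h' : t.1.2.2 = u.1.1 := congrArg (fun w => w.1.1) h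
    apply Subtype.ext
    show ((gmul t u).1.1, (0 : ℤ), (gmul t u).1.1) = _
    rw [gmul_val _ _ h']
    rfl
  mul_src t := by
    apply Subtype.ext
    rw [gmul_val _ _ rfl]
    simp
  rng_mul_self t := by
    apply Subtype.ext
    rw [gmul_val _ _ rfl]
    simp
  src_inv t := Subtype.ext rfl
  rng_inv t := Subtype.ext rfl
  mul_inv t := by
    apply Subtype.ext
    rw [gmul_val _ _ rfl]
    simp
  inv_mul t := by
    apply Subtype.ext
    rw [gmul_val _ _ rfl]
    simp

/-! ### The stabilised graph `SE` -/

/-- The graph `SE` obtained from `E` by attaching an infinite head `⋯ f₃ f₂ f₁` at every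
vertex.  The new vertex `Sum.inr (v, i)` is `vᵢ₊₁`, and the new edge `Sum.inr (v, i)` is
`fᵢ₊₁,ᵥ`, with source `vᵢ₊₁` and range `vᵢ` (where `v₀ = v`). -/
def stab (Γ : DirGraph.{u}) : DirGraph.{u} where
  V := Γ.V ⊕ (Γ.V × ℕ)
  E := Γ.E ⊕ (Γ.V × ℕ)
  s e := match e with
    | .inl e => .inl (Γ.s e)
    | .inr (v, i) => .inr (v, i)
  r e := match e with
    | .inl e => .inl (Γ.r e)
    | .inr (v, 0) => .inl v
    | .inr (v, i + 1) => .inr (v, i)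

@[simp] lemma stab_s_inl (e : Γ.E) : Γ.stab.s (Sum.inl e) = Sum.inl (Γ.s e) := rfl
@[simp] lemma stab_s_inr (p : Γ.V × ℕ) : Γ.stab.s (Sum.inr p) = Sum.inr p := rfl
@[simp] lemma stab_r_inl (e : Γ.E) : Γ.stab.r (Sum.inl e) = Sum.inl (Γ.r e) := rfl
@[simp] lemma stab_r_inr_zero (v : Γ.V) : Γ.stab.r (Sum.inr (v, 0)) = Sum.inl v := rfl
@[simp] lemma stab_r_inr_succ (v : Γ.V) (i : ℕ) :
    Γ.stab.r (Sum.inr (v, i + 1)) = Sum.inr (v, i) := rfl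

/-- The source vertex `vᵢ` of the head path `μ_{i,v}`. -/
def headSrcV (Γ : DirGraph) (v : Γ.V) : ℕ → Γ.stab.V
  | 0 => .inl v
  | i + 1 => .inr (v, i)

/-- The edges `fᵢ,ᵥ fᵢ₋₁,ᵥ ⋯ f₁,ᵥ` of the head path `μ_{i,v}`. -/
def headEdges (Γ : DirGraph) (v : Γ.V) : ℕ → List Γ.stab.E
  | 0 => []
  | i + 1 => .inr (v, i) :: headEdges Γ v i

lemma headIsPath (Γ : DirGraph) (v : Γ.V) (i : ℕ) :
    Γ.stab.IsPathList (headSrcV Γ v i) (headEdges Γ v i) (Sum.inl v) := by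
  induction i with
  | zero => exact .nil _
  | succ k ih =>
    have hr : Γ.stab.r (Sum.inr (v, k)) = headSrcV Γ v k := by
      cases k <;> rfl
    exact .cons _ rfl (hr ▸ ih)

/-- The head path `μ_{i,v} = f_{i,v} f_{i-1,v} ⋯ f_{1,v}` from `vᵢ` to `v` in `SE`
(`μ_{0,v}` is the vertex path at `v`). -/
def headPath (Γ : DirGraph) (v : Γ.V) (i : ℕ) : Γ.stab.FinPath :=
  ⟨headSrcV Γ v i, headEdges Γ v i, Sum.inl v, headIsPath Γ v i⟩

lemma isPathList_map_inl {v w : Γ.V} {l : List Γ.E} (h : Γ.IsPathList v l w) :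
    Γ.stab.IsPathList (Sum.inl v) (l.map Sum.inl) (Sum.inl w) := by
  induction h with
  | nil v => exact .nil _
  | cons e hv h ih => exact .cons _ (congrArg Sum.inl hv) ih

lemma isSink_stab {v : Γ.V} (h : Γ.IsSink v) : Γ.stab.IsSink (Sum.inl v) := by
  intro e he
  cases e with
  | inl e' => exact h e' (Sum.inl_injective he)
  | inr p => simp at he

lemma isInfiniteEmitter_stab {v : Γ.V} (h : Γ.IsInfiniteEmitter v) :
    Γ.stab.IsInfiniteEmitter (Sum.inl v) := by
  have hsub : Sum.inl '' {e | Γ.s e = v} ⊆ {e' | Γ.stab.s e' = Sum.inl v} := by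
    rintro _ ⟨e, he, rfl⟩
    exact congrArg Sum.inl he
  exact Set.Infinite.mono hsub (h.image Sum.inl_injective.injOn)

lemma isBoundaryVertex_stab {v : Γ.V} (h : Γ.IsBoundaryVertex v) :
    Γ.stab.IsBoundaryVertex (Sum.inl v) :=
  h.elim (fun h => Or.inl (isSink_stab h)) (fun h => Or.inr (isInfiniteEmitter_stab h))

/-- A finite path of `E`, viewed as a finite path of `SE`. -/
def FinPath.toStab (p : Γ.FinPath) : Γ.stab.FinPath :=
  ⟨Sum.inl p.src, p.edges.map Sum.inl, Sum.inl p.rng, isPathList_map_inl p.isPath⟩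

/-- An infinite path of `E`, viewed as an infinite path of `SE`. -/
def InfPath.toStab (x : Γ.InfPath) : Γ.stab.InfPath :=
  ⟨fun n => Sum.inl (x.edges n), fun n => congrArg Sum.inl (x.compat n)⟩

/-- A boundary path of `E`, viewed as a boundary path of `SE`. -/
def BPath.toStab : Γ.BPath → Γ.stab.BPath
  | .fin p hb => .fin p.toStab (isBoundaryVertex_stab hb)
  | .inf x => .inf x.toStab

end DirGraph

/-!
The map `((x, k, y), (i, j)) ↦ (f_{i} ⋯ f_{1} x, i + k - j, f_{j} ⋯ f_{1} y)`, with the heads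
at `s(x)` and `s(y)`, is an isomorphism of topological groupoids `G_E × ℛ ≅ G_{SE}`; the theorem
follows by composing such isomorphisms.

It is bijective because every boundary path of `SE` is `f_{i,v} ⋯ f_{1,v} x` for a unique `i`
and a unique boundary path `x` of `E`, and prefixing a path by `n` edges changes the lag of its
shift equivalences by `n`. It is a homeomorphism because it maps `Z(α, β ∖ F) × {(i, j)}` onto
`Z(f_i ⋯ f_1 α, f_j ⋯ f_1 β ∖ F)`, while a basic set of `SE` whose paths end at a head vertex is
empty or does not change when its paths are prolonged down the head into `E`.
-/

namespace GroupoidStruct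

variable {G : Type u} {H : Type v} {K : Type w}
  [TopologicalSpace G] [TopologicalSpace H] [TopologicalSpace K]
  {S : GroupoidStruct G} {T : GroupoidStruct H} {U : GroupoidStruct K}

def GroupoidIso.trans (e₁ : GroupoidIso S T) (e₂ : GroupoidIso T U) : GroupoidIso S U where
  toHomeomorph := e₁.toHomeomorph.trans e₂.toHomeomorph
  map_mul a b h := by
    have hc : T.src (e₁.toHomeomorph a) = T.rng (e₁.toHomeomorph b) := by
      rw [← e₁.map_src, ← e₁.map_rng, h]
    simp only [Homeomorph.trans_apply, e₁.map_mul a b h, e₂.map_mul _ _ hc]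
  map_inv a := by simp only [Homeomorph.trans_apply, e₁.map_inv, e₂.map_inv]
  map_src a := by simp only [Homeomorph.trans_apply, e₁.map_src, e₂.map_src]
  map_rng a := by simp only [Homeomorph.trans_apply, e₁.map_rng, e₂.map_rng]

def GroupoidIso.symm (e : GroupoidIso S T) : GroupoidIso T S where
  toHomeomorph := e.toHomeomorph.symm
  map_src a := e.toHomeomorph.injective <| by
    rw [Homeomorph.apply_symm_apply, e.map_src, Homeomorph.apply_symm_apply]
  map_rng a := e.toHomeomorph.injective <| by
    rw [Homeomorph.apply_symm_apply, e.map_rng, Homeomorph.apply_symm_apply]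
  map_inv a := e.toHomeomorph.injective <| by
    rw [Homeomorph.apply_symm_apply, e.map_inv, Homeomorph.apply_symm_apply]
  map_mul a b h := by
    have hc : S.src (e.toHomeomorph.symm a) = S.rng (e.toHomeomorph.symm b) :=
      e.toHomeomorph.injective <| by
        rw [e.map_src, e.map_rng, Homeomorph.apply_symm_apply, Homeomorph.apply_symm_apply, h]
    apply e.toHomeomorph.injective
    rw [Homeomorph.apply_symm_apply, e.map_mul _ _ hc, Homeomorph.apply_symm_apply,
      Homeomorph.apply_symm_apply]

end GroupoidStruct

namespace DirGraph

variable {Γ : DirGraph.{u}}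

open BPath

lemma IsPathList.append {v w z : Γ.V} {l l' : List Γ.E} (h : Γ.IsPathList v l w)
    (h' : Γ.IsPathList w l' z) : Γ.IsPathList v (l ++ l') z := by
  induction h with
  | nil => exact h'
  | cons e hv _ ih => exact .cons e hv (ih h')

lemma FinPath.ext {p q : Γ.FinPath} (hs : p.src = q.src) (he : p.edges = q.edges)
    (hr : p.rng = q.rng) : p = q := by
  cases p; cases q; cases hs; cases he; cases hr; rfl

lemma InfPath.ext {x y : Γ.InfPath} (h : x.edges = y.edges) : x = y := by
  cases x; cases y; cases h; rfl

namespace BPath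

lemma fin_congr {p q : Γ.FinPath} {hp : Γ.IsBoundaryVertex p.rng}
    {hq : Γ.IsBoundaryVertex q.rng} (h : p = q) : fin p hp = fin q hq := by
  cases h; rfl

variable {e : Γ.E} {x y : Γ.BPath} {k : ℤ}

lemma src_cons (h : x.src = Γ.r e) : (x.cons e h).src = Γ.s e := by
  cases x <;> rfl

lemma length_cons (h : x.src = Γ.r e) : (x.cons e h).length = x.length + 1 := by
  cases x <;> simp [cons, length]

lemma edge?_cons_zero (h : x.src = Γ.r e) : (x.cons e h).edge? 0 = some e := by
  cases x <;> simp [cons, edge?]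

lemma tail_cons (h : x.src = Γ.r e) : (x.cons e h).tail = x := by
  cases x with
  | fin p hb => exact fin_congr (FinPath.ext h.symm rfl rfl)
  | inf y => exact congrArg inf (InfPath.ext rfl)

lemma cons_congr (h : x = y) (hx : x.src = Γ.r e) (hy : y.src = Γ.r e) :
    x.cons e hx = y.cons e hy := by
  cases h; rfl

lemma consE_eq_cons (h : x.src = Γ.r e) : consE e x = x.cons e h := dif_pos h

lemma eq_cons_tail (hx : 1 ≤ x.length) :
    ∃ (e : Γ.E) (h : x.tail.src = Γ.r e), Γ.s e = x.src ∧ x = x.tail.cons e h := by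
  cases x with
  | fin p hb =>
    obtain ⟨v, _ | ⟨e, l⟩, w, hp⟩ := p
    · simp [length] at hx
    · cases hp with
      | cons _ hv _ => exact ⟨e, rfl, hv, fin_congr (FinPath.ext hv.symm rfl rfl)⟩
  | inf y =>
    refine ⟨y.edges 0, (y.compat 0).symm, rfl, congrArg inf (InfPath.ext ?_)⟩
    funext n
    cases n <;> rfl

lemma shift_succ (n : ℕ) (x : Γ.BPath) : shift (n + 1) x = shift n x.tail :=
  Function.iterate_succ_apply tail n x

lemma shift_succ' (n : ℕ) (x : Γ.BPath) : shift (n + 1) x = (shift n x).tail :=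
  Function.iterate_succ_apply' tail n x

lemma src_foldr_consE {v w : Γ.V} {l : List Γ.E} (hp : Γ.IsPathList v l w)
    (hx : x.src = w) : (l.foldr consE x).src = v := by
  induction hp with
  | nil => exact hx
  | cons e hv _ ih => rw [List.foldr_cons, consE_eq_cons (ih hx), src_cons, hv]

lemma shift_foldr_consE {v w : Γ.V} {l : List Γ.E} (hp : Γ.IsPathList v l w)
    (hx : x.src = w) : shift l.length (l.foldr consE x) = x := by
  induction hp with
  | nil => rfl
  | cons e _ h ih =>
    rw [List.foldr_cons, consE_eq_cons (src_foldr_consE h hx), List.length_cons, shift_succ,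
      tail_cons, ih hx]

lemma length_foldr_consE {v w : Γ.V} {l : List Γ.E} (hp : Γ.IsPathList v l w)
    (hx : x.src = w) : (l.foldr consE x).length = l.length + x.length := by
  induction hp with
  | nil => simp
  | cons e _ h ih =>
    rw [List.foldr_cons, consE_eq_cons (src_foldr_consE h hx), length_cons, ih hx,
      List.length_cons]
    push_cast
    ring

variable {μ : Γ.FinPath}

lemma src_concat (hx : x.src = μ.rng) : (concat μ x).src = μ.src :=
  src_foldr_consE μ.isPath hx

lemma shift_concat (hx : x.src = μ.rng) : shift μ.edges.length (concat μ x) = x :=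
  shift_foldr_consE μ.isPath hx

lemma length_concat (hx : x.src = μ.rng) : (concat μ x).length = μ.edges.length + x.length :=
  length_foldr_consE μ.isPath hx

lemma exists_concat_shift {m : ℕ} (hm : (m : ℕ∞) ≤ x.length) :
    ∃ μ : Γ.FinPath, μ.src = x.src ∧ μ.edges.length = m ∧ μ.rng = (shift m x).src ∧
      concat μ (shift m x) = x := by
  induction m generalizing x with
  | zero => exact ⟨FinPath.ofVertex Γ x.src, rfl, rfl, rfl, rfl⟩
  | succ m ih =>
    obtain ⟨e, he, hse, hx⟩ := eq_cons_tail (le_trans (by simp) hm)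
    have hm' : (m : ℕ∞) ≤ x.tail.length := by
      rw [length_tail]
      exact ENat.le_sub_one_of_lt
        ((ENat.add_one_le_iff (ENat.natCast_ne_top m)).1 (by exact_mod_cast hm))
    obtain ⟨μ, hsrc, hlen, hrng, hcat⟩ := ih hm'
    refine ⟨⟨Γ.s e, e :: μ.edges, μ.rng, .cons e rfl ((hsrc.trans he) ▸ μ.isPath)⟩, hse,
      by simp [hlen], by rw [shift_succ]; exact hrng, ?_⟩
    change consE e (concat μ (shift (m + 1) x)) = x
    rw [shift_succ, hcat, consE_eq_cons he]
    exact hx.symm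

/-- Shift equivalence with lag `k`: `(x, k, y)` is an arrow of `G_E` (see `GraphGpd`). -/
def ShiftEquiv (x : Γ.BPath) (k : ℤ) (y : Γ.BPath) : Prop :=
  ∃ m n : ℕ, (m : ℤ) - n = k ∧ (m : ℕ∞) ≤ x.length ∧ (n : ℕ∞) ≤ y.length ∧
    shift m x = shift n y

lemma ShiftEquiv.symm : ShiftEquiv x k y → ShiftEquiv y (-k) x
  | ⟨m, n, hk, hm, hn, hs⟩ => ⟨n, m, by omega, hn, hm, hs.symm⟩

lemma shiftEquiv_comm : ShiftEquiv x k y ↔ ShiftEquiv y (-k) x :=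
  ⟨ShiftEquiv.symm, fun h => by simpa using h.symm⟩

lemma shiftEquiv_cons_left_iff (h : x.src = Γ.r e) :
    ShiftEquiv (x.cons e h) k y ↔ ShiftEquiv x (k - 1) y := by
  constructor
  · rintro ⟨_ | m, n, hk, hm, hn, hs⟩
    · -- `x.cons e h = σⁿ y`, so `x = σⁿ⁺¹ y`
      have hlen : x.length + 1 = y.length - n := by
        rw [← length_cons h, ← length_shift]
        exact congrArg length hs
      refine ⟨0, n + 1, by omega, by simp, ?_, ?_⟩
      · exact (ENat.add_one_le_iff (ENat.natCast_ne_top n)).2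
          (tsub_pos_iff_lt.1 (hlen ▸ pos_of_ne_zero (by simp)))
      · rw [shift_succ', ← hs]
        exact (tail_cons h).symm
    · refine ⟨m, n, by push_cast at hk; omega, ?_, hn, ?_⟩
      · rw [length_cons h] at hm
        exact (ENat.add_le_add_iff_right ENat.one_ne_top).1 (by exact_mod_cast hm)
      · rwa [shift_succ, tail_cons] at hs
  · rintro ⟨m, n, hk, hm, hn, hs⟩
    refine ⟨m + 1, n, by push_cast; omega, ?_, hn, ?_⟩
    · rw [length_cons h]
      push_cast
      gcongr
    · rwa [shift_succ, tail_cons]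

lemma shiftEquiv_concat {α β : Γ.FinPath} {x : Γ.BPath} (hα : x.src = α.rng)
    (hβ : x.src = β.rng) :
    ShiftEquiv (concat α x) (α.edges.length - β.edges.length) (concat β x) :=
  ⟨α.edges.length, β.edges.length, rfl, by rw [length_concat hα]; exact le_self_add,
    by rw [length_concat hβ]; exact le_self_add, by rw [shift_concat hα, shift_concat hβ]⟩

end BPath

lemma stab_r_inr (v : Γ.V) (i : ℕ) : Γ.stab.r (Sum.inr (v, i)) = headSrcV Γ v i := by
  cases i <;> rfl

lemma headEdges_length (v : Γ.V) (i : ℕ) : (headEdges Γ v i).length = i := by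
  induction i with
  | zero => rfl
  | succ i ih => exact congrArg (· + 1) ih

lemma headPath_length (v : Γ.V) (i : ℕ) : (headPath Γ v i).edges.length = i :=
  headEdges_length v i

lemma headSrcV_inj {v w : Γ.V} {i j : ℕ} (h : headSrcV Γ v i = headSrcV Γ w j) :
    v = w ∧ i = j := by
  rcases i with _ | i <;> rcases j with _ | j
  · exact ⟨Sum.inl_injective h, rfl⟩
  · exact absurd h Sum.inl_ne_inr
  · exact absurd h Sum.inr_ne_inl
  · obtain ⟨hv, hi⟩ := Prod.mk.inj (Sum.inr_injective h)
    exact ⟨hv, congrArg (· + 1) hi⟩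

lemma exists_eq_headSrcV (a : Γ.stab.V) : ∃ (v : Γ.V) (i : ℕ), a = headSrcV Γ v i := by
  rcases a with v | ⟨v, i⟩
  exacts [⟨v, 0, rfl⟩, ⟨v, i + 1, rfl⟩]

lemma isBoundaryVertex_of_stab {w : Γ.V} (h : Γ.stab.IsBoundaryVertex (Sum.inl w)) :
    Γ.IsBoundaryVertex w := by
  refine h.imp (fun h e he => h (Sum.inl e) (congrArg Sum.inl he)) fun h hfin => h ?_
  refine (hfin.image Sum.inl).subset ?_
  rintro (e | q) he
  · exact ⟨e, Sum.inl_injective he, rfl⟩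
  · exact absurd he Sum.inr_ne_inl

lemma stab_s_eq_inl {e : Γ.stab.E} {v : Γ.V} (h : Γ.stab.s e = Sum.inl v) :
    ∃ e₀ : Γ.E, e = Sum.inl e₀ ∧ Γ.s e₀ = v := by
  rcases e with e₀ | q
  exacts [⟨e₀, rfl, Sum.inl_injective h⟩, absurd h Sum.inr_ne_inl]

lemma stab_s_eq_inr {e : Γ.stab.E} {v : Γ.V} {i : ℕ} (h : Γ.stab.s e = Sum.inr (v, i)) :
    e = Sum.inr (v, i) := by
  rcases e with e | q
  exacts [absurd h Sum.inl_ne_inr, congrArg Sum.inr (Sum.inr_injective h)]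

lemma not_isBoundaryVertex_inr (v : Γ.V) (i : ℕ) :
    ¬ Γ.stab.IsBoundaryVertex (Sum.inr (v, i)) := by
  rintro (h | h)
  · exact h (Sum.inr (v, i)) rfl
  · exact h ((Set.finite_singleton (Sum.inr (v, i))).subset fun e he => stab_s_eq_inr he)

/-- The path `f_{i,v} ⋯ f_{1,v} μ` of `SE`, where `v = s(μ)`. -/
def FinPath.toStabHead (i : ℕ) (μ : Γ.FinPath) : Γ.stab.FinPath :=
  ⟨headSrcV Γ μ.src i, headEdges Γ μ.src i ++ μ.toStab.edges, Sum.inl μ.rng,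
    (headIsPath Γ μ.src i).append μ.toStab.isPath⟩

lemma FinPath.length_toStab (μ : Γ.FinPath) : μ.toStab.edges.length = μ.edges.length :=
  List.length_map ..

lemma FinPath.length_toStabHead (i : ℕ) (μ : Γ.FinPath) :
    (μ.toStabHead i).edges.length = i + μ.edges.length := by
  rw [FinPath.toStabHead, List.length_append, headEdges_length, FinPath.length_toStab]

/-- Every path of `SE` ending at `v_q` becomes, once prolonged along the head from `v_q` down
to `v`, the lift `f_{i,u} ⋯ f_{1,u} α` of a path `α` of `E`. -/
lemma exists_toStabHead_of_isPathList {a : Γ.stab.V} {l : List Γ.stab.E} {v : Γ.V} {q : ℕ}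
    (h : Γ.stab.IsPathList a l (headSrcV Γ v q)) :
    ∃ (i : ℕ) (α : Γ.FinPath), α.rng = v ∧ a = headSrcV Γ α.src i ∧
      l ++ headEdges Γ v q = (α.toStabHead i).edges := by
  induction l generalizing a with
  | nil =>
    cases h
    exact ⟨q, FinPath.ofVertex Γ v, rfl, rfl, (List.append_nil _).symm⟩
  | cons e l ih =>
    cases h with
    | cons _ hs h =>
      obtain ⟨i, α, hrng, hsrc, hedges⟩ := ih h
      subst hs
      rcases e with e | ⟨u, j⟩
      · have hsrc : headSrcV Γ (Γ.r e) 0 = headSrcV Γ α.src i := hsrc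
        obtain ⟨hα, rfl⟩ := headSrcV_inj hsrc
        refine ⟨0, ⟨Γ.s e, e :: α.edges, α.rng, .cons e rfl (hα ▸ α.isPath)⟩, hrng, rfl, ?_⟩
        exact congrArg (List.cons _) hedges
      · obtain ⟨rfl, rfl⟩ := headSrcV_inj ((stab_r_inr u j).symm.trans hsrc)
        exact ⟨j + 1, α, hrng, rfl, congrArg (List.cons _) hedges⟩

lemma InfPath.exists_eq_toStab {y : Γ.stab.InfPath} {v : Γ.V}
    (h : Γ.stab.s (y.edges 0) = Sum.inl v) :
    ∃ x : Γ.InfPath, Γ.s (x.edges 0) = v ∧ y = x.toStab := by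
  have hE : ∀ n, ∃ e : Γ.E, y.edges n = Sum.inl e := by
    intro n
    induction n with
    | zero => exact (stab_s_eq_inl h).imp fun _ => And.left
    | succ n ih =>
      obtain ⟨e, he⟩ := ih
      have hc := y.compat n
      rw [he] at hc
      exact (stab_s_eq_inl hc.symm).imp fun _ => And.left
  choose f hf using hE
  have hcompat : ∀ n, Γ.r (f n) = Γ.s (f (n + 1)) := by
    intro n
    have hc := y.compat n
    rw [hf, hf] at hc
    exact Sum.inl_injective hc
  rw [hf] at h
  exact ⟨⟨f, hcompat⟩, Sum.inl_injective h, InfPath.ext (funext hf)⟩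

namespace BPath

variable {x y : Γ.BPath} {z : Γ.stab.BPath} {k : ℤ}

lemma toStab_src (x : Γ.BPath) : x.toStab.src = Sum.inl x.src := by
  cases x <;> rfl

lemma toStab_length (x : Γ.BPath) : x.toStab.length = x.length := by
  cases x with
  | fin p hb => exact congrArg Nat.cast p.length_toStab
  | inf y => rfl

lemma toStab_edge? (x : Γ.BPath) (n : ℕ) : x.toStab.edge? n = (x.edge? n).map Sum.inl := by
  cases x with
  | fin p hb => exact List.getElem?_map ..
  | inf y => rfl

lemma toStab_injective : Function.Injective (toStab (Γ := Γ)) := by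
  rintro (⟨⟨v, l, w, hp⟩, hb⟩ | ⟨f, hf⟩) (⟨⟨v', l', w', hp'⟩, hb'⟩ | ⟨f', hf'⟩) h
  · injection h with h
    injection h with h₁ h₂ h₃
    exact fin_congr (FinPath.ext (Sum.inl_injective h₁)
      (List.map_injective_iff.2 Sum.inl_injective h₂) (Sum.inl_injective h₃))
  · cases h
  · cases h
  · injection h with h
    injection h with h
    exact congrArg inf (InfPath.ext (funext fun n => Sum.inl_injective (congrFun h n)))

lemma toStab_tail (x : Γ.BPath) : x.tail.toStab = x.toStab.tail := by
  rcases x with ⟨⟨v, _ | ⟨e, l⟩, w, hp⟩, hb⟩ | y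
  · rfl
  · exact fin_congr (FinPath.ext rfl rfl rfl)
  · rfl

lemma toStab_shift (n : ℕ) (x : Γ.BPath) : (shift n x).toStab = shift n x.toStab := by
  induction n generalizing x with
  | zero => rfl
  | succ n ih => rw [shift_succ, shift_succ, ih, toStab_tail]

lemma toStab_consE (e : Γ.E) (x : Γ.BPath) :
    (consE e x).toStab = consE (Sum.inl e) x.toStab := by
  by_cases h : x.src = Γ.r e
  · have h' : x.toStab.src = Γ.stab.r (Sum.inl e) := by rw [toStab_src, h]; rfl
    rw [consE_eq_cons h, consE_eq_cons h']
    rcases x with p | y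
    · exact fin_congr (FinPath.ext rfl rfl rfl)
    · refine congrArg inf (InfPath.ext (funext fun n => ?_))
      cases n <;> rfl
  · have h' : ¬ x.toStab.src = Γ.stab.r (Sum.inl e) := by
      rw [toStab_src]
      exact fun hc => h (Sum.inl_injective hc)
    simp only [consE, dif_neg h, dif_neg h']

lemma toStab_concat (μ : Γ.FinPath) (x : Γ.BPath) :
    (concat μ x).toStab = concat μ.toStab x.toStab := by
  change (μ.edges.foldr consE x).toStab = (μ.edges.map Sum.inl).foldr consE x.toStab
  induction μ.edges with
  | nil => rfl
  | cons e l ih => rw [List.foldr_cons, toStab_consE, ih]; rfl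

lemma shiftEquiv_toStab_iff : ShiftEquiv x.toStab k y.toStab ↔ ShiftEquiv x k y := by
  simp only [ShiftEquiv, toStab_length, ← toStab_shift, toStab_injective.eq_iff]

lemma exists_eq_toStab {v : Γ.V} (h : z.src = Sum.inl v) :
    ∃ x : Γ.BPath, x.src = v ∧ z = x.toStab := by
  rcases z with ⟨⟨a, l, b, hp⟩, hb⟩ | y
  · change a = Sum.inl v at h
    subst h
    obtain ⟨w, q, rfl⟩ := exists_eq_headSrcV b
    have hq : q = 0 := by
      rcases q with _ | q
      · rfl
      · exact absurd hb (not_isBoundaryVertex_inr _ _)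
    subst hq
    obtain ⟨i, α, rfl, hsrc, hedges⟩ := exists_toStabHead_of_isPathList hp
    have hsrc : headSrcV Γ v 0 = headSrcV Γ α.src i := hsrc
    obtain ⟨rfl, rfl⟩ := headSrcV_inj hsrc
    refine ⟨fin α (isBoundaryVertex_of_stab hb), rfl, fin_congr (FinPath.ext rfl ?_ rfl)⟩
    simpa [FinPath.toStabHead, FinPath.toStab, headEdges] using hedges
  · obtain ⟨x, hx, rfl⟩ := InfPath.exists_eq_toStab h
    exact ⟨inf x, hx, rfl⟩

/-- The boundary path `f_{i,v} ⋯ f_{1,v} x` of `SE`, where `v = s(x)`. -/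
noncomputable def toStabHead (i : ℕ) (x : Γ.BPath) : Γ.stab.BPath :=
  concat (headPath Γ x.src i) x.toStab

lemma src_toStabHead (i : ℕ) (x : Γ.BPath) : (x.toStabHead i).src = headSrcV Γ x.src i :=
  src_concat (μ := headPath Γ x.src i) (toStab_src x)

lemma length_toStabHead (i : ℕ) (x : Γ.BPath) : (x.toStabHead i).length = i + x.length := by
  rw [toStabHead, length_concat (toStab_src x), headPath_length, toStab_length]

lemma shift_toStabHead (i : ℕ) (x : Γ.BPath) : shift i (x.toStabHead i) = x.toStab := by
  have := shift_concat (μ := headPath Γ x.src i) (toStab_src x)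
  rwa [headPath_length] at this

lemma toStabHead_succ (i : ℕ) (x : Γ.BPath) :
    x.toStabHead (i + 1) = (x.toStabHead i).cons (Sum.inr (x.src, i))
      (by rw [src_toStabHead, stab_r_inr]) :=
  consE_eq_cons _

lemma toStabHead_inj {i j : ℕ} (h : x.toStabHead i = y.toStabHead j) : i = j ∧ x = y := by
  have hsrc : headSrcV Γ x.src i = headSrcV Γ y.src j := by
    rw [← src_toStabHead, ← src_toStabHead, h]
  obtain ⟨-, rfl⟩ := headSrcV_inj hsrc
  refine ⟨rfl, toStab_injective ?_⟩
  rw [← shift_toStabHead i x, h, shift_toStabHead]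

lemma concat_toStabHead {μ : Γ.FinPath} (hx : x.src = μ.rng) (i : ℕ) :
    (concat μ x).toStabHead i = concat (μ.toStabHead i) x.toStab := by
  rw [toStabHead, src_concat hx, toStab_concat]
  exact (List.foldr_append ..).symm

lemma concat_toStabHead_of_edges_eq {α β : Γ.stab.FinPath} {q : ℕ}
    (h : α.edges ++ headEdges Γ x.src q = β.edges) :
    concat α (x.toStabHead q) = concat β x.toStab := by
  rw [concat, concat, ← h, List.foldr_append]
  rfl

lemma one_le_length_of_src_eq_inr {v : Γ.V} {i : ℕ} (h : z.src = Sum.inr (v, i)) :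
    1 ≤ z.length := by
  rcases z with ⟨⟨a, _ | ⟨e, l⟩, b, hp⟩, hb⟩ | y
  · cases hp
    have ha : a = Sum.inr (v, i) := h
    subst ha
    exact absurd hb (not_isBoundaryVertex_inr v i)
  · simp [length]
  · simp [length]

lemma edge?_zero_of_src_eq_inr {v : Γ.V} {i : ℕ} (h : z.src = Sum.inr (v, i)) :
    z.edge? 0 = some (Sum.inr (v, i)) := by
  obtain ⟨e, he, hse, hz⟩ := eq_cons_tail (one_le_length_of_src_eq_inr h)
  rw [hz, edge?_cons_zero, stab_s_eq_inr (hse.trans h)]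
  rfl

lemma exists_toStabHead_of_src {v : Γ.V} {i : ℕ} (h : z.src = headSrcV Γ v i) :
    ∃ x : Γ.BPath, x.src = v ∧ z = x.toStabHead i := by
  induction i generalizing z with
  | zero => exact exists_eq_toStab h
  | succ i ih =>
    obtain ⟨e, he, hse, hz⟩ := eq_cons_tail (one_le_length_of_src_eq_inr h)
    obtain rfl := stab_s_eq_inr (hse.trans h)
    obtain ⟨x, rfl, hx⟩ := ih (he.trans (stab_r_inr _ i))
    exact ⟨x, rfl, hz.trans ((cons_congr hx _ _).trans (toStabHead_succ i x).symm)⟩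

lemma exists_toStabHead (z : Γ.stab.BPath) : ∃ (i : ℕ) (x : Γ.BPath), z = x.toStabHead i := by
  obtain ⟨v, i, hv⟩ := exists_eq_headSrcV z.src
  obtain ⟨x, -, hx⟩ := exists_toStabHead_of_src hv
  exact ⟨i, x, hx⟩

lemma shiftEquiv_toStabHead_left_iff {i : ℕ} :
    ShiftEquiv (x.toStabHead i) k z ↔ ShiftEquiv x.toStab (k - i) z := by
  induction i generalizing k with
  | zero => simp [toStabHead, headPath, headEdges, concat]
  | succ i ih =>
    rw [toStabHead_succ]
    refine (shiftEquiv_cons_left_iff _).trans ?_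
    rw [ih, Nat.cast_succ, sub_sub, add_comm 1]

lemma shiftEquiv_toStabHead_iff {i j : ℕ} :
    ShiftEquiv (x.toStabHead i) k (y.toStabHead j) ↔ ShiftEquiv x (k - i + j) y := by
  rw [shiftEquiv_toStabHead_left_iff, shiftEquiv_comm, shiftEquiv_toStabHead_left_iff,
    shiftEquiv_comm, shiftEquiv_toStab_iff, neg_sub, sub_neg_eq_add, add_comm (j : ℤ)]

end BPath

noncomputable def stabMap (T : Γ.GraphGpd × (ℕ × ℕ)) : Γ.stab.GraphGpd :=
  ⟨(T.1.1.1.toStabHead T.2.1, T.2.1 + T.1.1.2.1 - T.2.2, T.1.1.2.2.toStabHead T.2.2),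
    shiftEquiv_toStabHead_iff.2 <| by
      rw [show (T.2.1 + T.1.1.2.1 - T.2.2 : ℤ) - T.2.1 + T.2.2 = T.1.1.2.1 by ring]
      exact T.1.2⟩

@[simp] lemma stabMap_val (T : Γ.GraphGpd × (ℕ × ℕ)) :
    (stabMap T).1 =
      (T.1.1.1.toStabHead T.2.1, T.2.1 + T.1.1.2.1 - T.2.2, T.1.1.2.2.toStabHead T.2.2) :=
  rfl

lemma stabMap_bijective : Function.Bijective (stabMap (Γ := Γ)) := by
  constructor
  · rintro ⟨⟨⟨x, k, y⟩, _⟩, i, j⟩ ⟨⟨⟨x', k', y'⟩, _⟩, i', j'⟩ h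
    have h' := congrArg Subtype.val h
    simp only [stabMap_val, Prod.mk.injEq] at h'
    obtain ⟨hx, hk, hy⟩ := h'
    obtain ⟨rfl, rfl⟩ := toStabHead_inj hx
    obtain ⟨rfl, rfl⟩ := toStabHead_inj hy
    obtain rfl : k = k' := by simp at hk; omega
    rfl
  · rintro ⟨⟨z, c, z'⟩, hc⟩
    obtain ⟨i, x, rfl⟩ := exists_toStabHead z
    obtain ⟨j, y, rfl⟩ := exists_toStabHead z'
    refine ⟨(⟨(x, c - i + j, y), shiftEquiv_toStabHead_iff.1 hc⟩, (i, j)), Subtype.ext ?_⟩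
    simp only [stabMap_val, Prod.mk.injEq, true_and, and_true]
    ring

noncomputable def stabEquiv (Γ : DirGraph.{u}) : (Γ.GraphGpd × (ℕ × ℕ)) ≃ Γ.stab.GraphGpd :=
  Equiv.ofBijective stabMap stabMap_bijective

-- Stated at the type `Γ.E ↪ Γ.stab.E` rather than `Γ.E ↪ Γ.E ⊕ _`, so that `rw` and `simp`
-- can match the finsets of edges appearing in basic sets of `SE`.
def stabEmbedding (Γ : DirGraph.{u}) : Γ.E ↪ Γ.stab.E := .inl

lemma mem_cyl_ofVertex {x : Γ.BPath} {v : Γ.V} {F : Finset Γ.E} :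
    x ∈ cyl (FinPath.ofVertex Γ v) F ↔ x.src = v ∧ ∀ e ∈ F, x.edge? 0 ≠ some e := by
  simp [cyl, hasPrefix, FinPath.ofVertex]

lemma toStab_mem_cyl_iff {x : Γ.BPath} {v : Γ.V} {F : Finset Γ.E} :
    x.toStab ∈ cyl (FinPath.ofVertex Γ.stab (Sum.inl v)) (F.map (stabEmbedding Γ)) ↔
      x ∈ cyl (FinPath.ofVertex Γ v) F := by
  refine mem_cyl_ofVertex.trans ?_
  rw [mem_cyl_ofVertex, toStab_src, toStab_edge?]
  refine and_congr Sum.inl_injective.eq_iff ⟨fun h e he hx => ?_, fun h e he hx => ?_⟩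
  · exact h (Sum.inl e) (Finset.mem_map_of_mem _ he) (by rw [hx]; rfl)
  · obtain ⟨e₀, he₀, rfl⟩ := Finset.mem_map.1 he
    exact h e₀ he₀ (Option.map_injective Sum.inl_injective hx)

lemma exists_finset_eq_map_inl {F : Finset Γ.stab.E} {v : Γ.V}
    (hF : ∀ e ∈ F, Γ.stab.s e = Sum.inl v) :
    ∃ F₀ : Finset Γ.E, F = F₀.map (stabEmbedding Γ) ∧ ∀ e ∈ F₀, Γ.s e = v := by
  classical
  refine ⟨F.preimage Sum.inl Sum.inl_injective.injOn, Finset.ext fun e => ?_,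
    fun e he => Sum.inl_injective (hF _ (Finset.mem_preimage.1 he))⟩
  refine ⟨fun he => ?_, fun he => ?_⟩
  · obtain ⟨e₀, rfl, -⟩ := stab_s_eq_inl (hF e he)
    exact Finset.mem_map_of_mem _ (Finset.mem_preimage.2 he)
  · obtain ⟨e₀, he₀, rfl⟩ := Finset.mem_map.1 he
    exact Finset.mem_preimage.1 he₀

/-- The basic open set `Z(α, β ∖ F)` of `G_E`. -/
def basicSet (α β : Γ.FinPath) (F : Finset Γ.E) : Set Γ.GraphGpd :=
  {t | ∃ x ∈ cyl (FinPath.ofVertex Γ α.rng) F,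
    t.1 = (concat α x, (α.edges.length : ℤ) - β.edges.length, concat β x)}

def basicSets (Γ : DirGraph.{u}) : Set (Set Γ.GraphGpd) :=
  {U | ∃ (α β : Γ.FinPath) (F : Finset Γ.E), α.rng = β.rng ∧ (∀ e ∈ F, Γ.s e = α.rng) ∧
    U = basicSet α β F}

lemma isOpen_of_mem_basicSets {U : Set Γ.GraphGpd} (hU : U ∈ basicSets Γ) : IsOpen U :=
  TopologicalSpace.GenerateOpen.basic U hU

lemma sUnion_basicSets : ⋃₀ basicSets Γ = Set.univ := by
  refine Set.eq_univ_of_forall fun t => ?_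
  obtain ⟨m, n, hk, hm, hn, hs⟩ := t.2
  obtain ⟨α, -, hα, hαr, hαx⟩ := exists_concat_shift hm
  obtain ⟨β, -, hβ, hβr, hβy⟩ := exists_concat_shift hn
  refine ⟨basicSet α β ∅, ⟨α, β, ∅, by rw [hαr, hβr, hs], by simp, rfl⟩, shift m t.1.1,
    mem_cyl_ofVertex.2 ⟨hαr.symm, by simp⟩, ?_⟩
  rw [hαx, hα, hβ, hk, hs, hβy]

lemma basicSet_congr {α β α' β' : Γ.FinPath} (F : Finset Γ.E) (hα : α.edges = α'.edges)
    (hβ : β.edges = β'.edges) (hr : α.rng = α'.rng) : basicSet α β F = basicSet α' β' F := by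
  simp only [basicSet, concat, hα, hβ, hr]

lemma stabMap_val_of_eq_concat {α β : Γ.FinPath} {x : Γ.BPath} (hα : x.src = α.rng)
    (hβ : x.src = β.rng) {t : Γ.GraphGpd}
    (ht : t.1 = (concat α x, (α.edges.length : ℤ) - β.edges.length, concat β x)) (i j : ℕ) :
    (stabMap (t, (i, j))).1 = (concat (α.toStabHead i) x.toStab,
      ((α.toStabHead i).edges.length : ℤ) - (β.toStabHead j).edges.length,
      concat (β.toStabHead j) x.toStab) := by
  rw [stabMap_val, ht, concat_toStabHead hα, concat_toStabHead hβ, FinPath.length_toStabHead,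
    FinPath.length_toStabHead]
  simp only [Nat.cast_add, Prod.mk.injEq, true_and, and_true]
  ring

lemma stabEquiv_image_basicSet {α β : Γ.FinPath} (F : Finset Γ.E) (hr : α.rng = β.rng)
    (i j : ℕ) :
    stabEquiv Γ '' (basicSet α β F ×ˢ {(i, j)}) =
      basicSet (α.toStabHead i) (β.toStabHead j) (F.map (stabEmbedding Γ)) := by
  ext T
  constructor
  · rintro ⟨⟨t, p⟩, ⟨⟨x, hx, ht⟩, hp⟩, rfl⟩
    obtain rfl : p = (i, j) := hp
    have hxα : x.src = α.rng := (mem_cyl_ofVertex.1 hx).1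
    exact ⟨x.toStab, toStab_mem_cyl_iff.2 hx, stabMap_val_of_eq_concat hxα (hxα.trans hr) ht i j⟩
  · rintro ⟨z, hz, hT⟩
    obtain ⟨x, hxα, rfl⟩ := exists_eq_toStab (mem_cyl_ofVertex.1 hz).1
    have hxβ : x.src = β.rng := hxα.trans hr
    refine ⟨(⟨(concat α x, _, concat β x), shiftEquiv_concat hxα hxβ⟩, (i, j)),
      ⟨⟨x, toStab_mem_cyl_iff.1 hz, rfl⟩, rfl⟩, Subtype.ext ?_⟩
    exact (stabMap_val_of_eq_concat hxα hxβ rfl i j).trans hT.symm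

lemma basicSet_toStabHead_mem_basicSets {α β : Γ.FinPath} {F : Finset Γ.E}
    (hr : α.rng = β.rng) (hF : ∀ e ∈ F, Γ.s e = α.rng) (i j : ℕ) :
    basicSet (α.toStabHead i) (β.toStabHead j) (F.map (stabEmbedding Γ)) ∈ basicSets Γ.stab := by
  refine ⟨_, _, _, congrArg Sum.inl hr, fun e he => ?_, rfl⟩
  obtain ⟨e₀, he₀, rfl⟩ := Finset.mem_map.1 he
  exact congrArg Sum.inl (hF e₀ he₀)

lemma basicSet_eq_of_edges_append {α β α' β' : Γ.stab.FinPath} {v : Γ.V} {q : ℕ}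
    (hα : α.rng = headSrcV Γ v q) (hα' : α'.rng = Sum.inl v)
    (hαe : α.edges ++ headEdges Γ v q = α'.edges) (hβe : β.edges ++ headEdges Γ v q = β'.edges) :
    basicSet α β ∅ = basicSet α' β' ∅ := by
  have hlen : (α.edges.length : ℤ) - β.edges.length = α'.edges.length - β'.edges.length := by
    rw [← hαe, ← hβe]
    simp only [List.length_append, headEdges_length, Nat.cast_add]
    ring
  ext t
  simp only [basicSet, mem_cyl_ofVertex, Finset.notMem_empty, IsEmpty.forall_iff,
    implies_true, and_true]
  constructor
  · rintro ⟨z, hz, ht⟩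
    obtain ⟨x, rfl, rfl⟩ := exists_toStabHead_of_src (hz.trans hα)
    refine ⟨x.toStab, by rw [toStab_src, hα'], ?_⟩
    rw [ht, concat_toStabHead_of_edges_eq hαe, concat_toStabHead_of_edges_eq hβe, hlen]
  · rintro ⟨z, hz, ht⟩
    obtain ⟨x, rfl, rfl⟩ := exists_eq_toStab (hz.trans hα')
    refine ⟨x.toStabHead q, by rw [src_toStabHead, hα], ?_⟩
    rw [ht, concat_toStabHead_of_edges_eq hαe, concat_toStabHead_of_edges_eq hβe, hlen]

lemma basicSet_stab_eq_empty_or_image {α β : Γ.stab.FinPath} {F : Finset Γ.stab.E}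
    (hr : α.rng = β.rng) (hF : ∀ e ∈ F, Γ.stab.s e = α.rng) :
    basicSet α β F = ∅ ∨
      ∃ U ∈ basicSets Γ, ∃ p : ℕ × ℕ, basicSet α β F = stabEquiv Γ '' (U ×ˢ {p}) := by
  obtain ⟨v, q, hq⟩ := exists_eq_headSrcV α.rng
  obtain ⟨i, α₀, rfl, -, hα⟩ := exists_toStabHead_of_isPathList (hq ▸ α.isPath)
  obtain ⟨j, β₀, hβ₀, -, hβ⟩ := exists_toStabHead_of_isPathList ((hr ▸ hq) ▸ β.isPath)
  have hr₀ : α₀.rng = β₀.rng := hβ₀.symm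
  rcases q with _ | p
  · -- `r(α)` is a vertex of `E`
    obtain ⟨F₀, rfl, hF₀⟩ :=
      exists_finset_eq_map_inl (v := α₀.rng) fun e he => (hF e he).trans hq
    refine Or.inr ⟨_, ⟨α₀, β₀, F₀, hr₀, hF₀, rfl⟩, (i, j), ?_⟩
    rw [stabEquiv_image_basicSet _ hr₀]
    exact basicSet_congr _ ((List.append_nil _).symm.trans hα)
      ((List.append_nil _).symm.trans hβ) hq
  · -- `r(α)` is a head vertex, which emits only the edge `Sum.inr (α₀.rng, p)`
    by_cases hmem : Sum.inr (α₀.rng, p) ∈ F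
    · refine Or.inl (Set.eq_empty_of_forall_notMem ?_)
      rintro t ⟨z, hz, -⟩
      obtain ⟨hzs, hzF⟩ := mem_cyl_ofVertex.1 hz
      exact hzF _ hmem (edge?_zero_of_src_eq_inr (hzs.trans hq))
    · obtain rfl : F = ∅ := Finset.eq_empty_of_forall_notMem fun e he =>
        hmem (stab_s_eq_inr ((hF e he).trans hq) ▸ he)
      refine Or.inr ⟨_, ⟨α₀, β₀, ∅, hr₀, by simp, rfl⟩, (i, j), ?_⟩
      rw [stabEquiv_image_basicSet _ hr₀, Finset.map_empty]
      exact basicSet_eq_of_edges_append hq rfl hα hβ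

lemma continuous_stabEquiv : Continuous (stabEquiv Γ) := by
  refine continuous_generateFrom_iff.2 ?_
  rintro _ ⟨α, β, F, hr, hF, rfl⟩
  change IsOpen (stabEquiv Γ ⁻¹' basicSet α β F)
  rcases basicSet_stab_eq_empty_or_image hr hF with h | ⟨U, hU, p, h⟩
  · rw [h, Set.preimage_empty]
    exact isOpen_empty
  · rw [h, Equiv.preimage_image]
    exact (isOpen_of_mem_basicSets hU).prod (isOpen_discrete _)

lemma continuous_stabEquiv_symm : Continuous (stabEquiv Γ).symm := by
  have hb := isTopologicalBasis_singletons (ℕ × ℕ)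
  have htop : (instTopologicalSpaceProd : TopologicalSpace (Γ.GraphGpd × (ℕ × ℕ))) =
      .generateFrom (Set.image2 (· ×ˢ ·) (basicSets Γ) {s | ∃ p, s = {p}}) := by
    rw [← prod_generateFrom_generateFrom_eq sUnion_basicSets hb.sUnion_eq,
      ← hb.eq_generateFrom]
    rfl
  rw [htop]
  refine continuous_generateFrom_iff.2 ?_
  rintro _ ⟨U, ⟨α, β, F, hr, hF, rfl⟩, _, ⟨⟨i, j⟩, rfl⟩, rfl⟩
  rw [← Equiv.image_eq_preimage_symm, stabEquiv_image_basicSet _ hr]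
  exact isOpen_of_mem_basicSets (basicSet_toStabHead_mem_basicSets hr hF i j)

open GroupoidStruct in
noncomputable def stabIso (Γ : DirGraph.{u}) :
    GroupoidIso ((graphGpd Γ).prod Rho) (graphGpd Γ.stab) where
  toHomeomorph := ⟨stabEquiv Γ, continuous_stabEquiv, continuous_stabEquiv_symm⟩
  map_src := by
    rintro ⟨t, i, j⟩
    refine Subtype.ext ?_
    show (stabMap (gsrc t, (j, j))).1 = (gsrc (stabMap (t, (i, j)))).1
    simp only [stabMap_val, gsrc_val, Prod.mk.injEq, true_and, and_true]
    ring
  map_rng := by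
    rintro ⟨t, i, j⟩
    refine Subtype.ext ?_
    show (stabMap (grng t, (i, i))).1 = (grng (stabMap (t, (i, j)))).1
    simp only [stabMap_val, grng_val, Prod.mk.injEq, true_and, and_true]
    ring
  map_inv := by
    rintro ⟨t, i, j⟩
    refine Subtype.ext ?_
    show (stabMap (ginv t, (j, i))).1 = (ginv (stabMap (t, (i, j)))).1
    simp only [stabMap_val, ginv_val, Prod.mk.injEq, true_and, and_true]
    ring
  map_mul := by
    rintro ⟨t, i, j⟩ ⟨t', i', j'⟩ h
    obtain ⟨ht, hj⟩ : t.1.2.2 = t'.1.1 ∧ j = i' := by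
      obtain ⟨h₁, h₂⟩ := Prod.ext_iff.1 h
      exact ⟨congrArg (fun s : Γ.GraphGpd => s.1.1) h₁, congrArg Prod.fst h₂⟩
    subst hj
    refine Subtype.ext ?_
    show (stabMap (gmul t t', (i, j'))).1 = (gmul (stabMap (t, (i, j))) (stabMap (t', (j, j')))).1
    rw [gmul_val _ _ (by simp [ht]), stabMap_val, gmul_val _ _ ht]
    simp only [stabMap_val, Prod.mk.injEq, true_and, and_true]
    ring

end DirGraph

open GroupoidStruct DirGraph in
/-- For directed graphs `E` and `F`, `G_E × ℛ ≅ G_F × ℛ` if and only if `G_{SE} ≅ G_{SF}`. -/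
theorem graphGpd_prod_Rho_iso_iff_stab_iso (Γ Δ : DirGraph.{u}) :
    Nonempty (GroupoidIso ((graphGpd Γ).prod Rho) ((graphGpd Δ).prod Rho)) ↔
    Nonempty (GroupoidIso (graphGpd Γ.stab) (graphGpd Δ.stab)) :=
  ⟨fun ⟨e⟩ => ⟨((stabIso Γ).symm.trans e).trans (stabIso Δ)⟩,
    fun ⟨e⟩ => ⟨((stabIso Γ).trans e).trans (stabIso Δ).symm⟩⟩
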